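/- arXiv:2007.04804 — 2 statements merged into one kernel-verified Lean document; each statement's English description precedes it below -/
import Mathlib

section
/- Let Q, S ∈ B_A(H). Then w_A(Q S^{#_A} + S Q) ≤ 2 ‖S‖_A · w_A(Q) and w_A(Q S^{#_A} − S Q) ≤ 2 ‖S‖_A · w_A(Q). -/
noncomputable section

open ContinuousLinearMap

/-- The semi-inner product induced by a positive operator `A`: `⟪x, y⟫_A = ⟪A x, y⟫`. -/
def sInnerA {E : Type*} [NormedAddCommGroup E] [InnerProductSpace ℂ E]
    (A : E →L[ℂ] E) (x y : E) : ℂ :=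
  inner ℂ (A x) y

/-- The seminorm induced by `A`: `‖x‖_A = √(re ⟪A x, x⟫)`. -/
def sNormA {E : Type*} [NormedAddCommGroup E] [InnerProductSpace ℂ E]
    (A : E →L[ℂ] E) (x : E) : ℝ :=
  Real.sqrt (sInnerA A x x).re

/-- The `A`-operator seminorm: `sup {‖T x‖_A : x ∈ closure (range A), ‖x‖_A = 1}`. -/
def opNormA {E : Type*} [NormedAddCommGroup E] [InnerProductSpace ℂ E]
    (A T : E →L[ℂ] E) : ℝ :=
  sSup {r | ∃ x ∈ closure (Set.range A), sNormA A x = 1 ∧ r = sNormA A (T x)}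

/-- The `A`-numerical radius: `sup {|⟪T x, x⟫_A| : ‖x‖_A = 1}`. -/
def wA {E : Type*} [NormedAddCommGroup E] [InnerProductSpace ℂ E]
    (A T : E →L[ℂ] E) : ℝ :=
  sSup {r | ∃ x, sNormA A x = 1 ∧ r = ‖sInnerA A (T x) x‖}

/-- The `A`-Crawford number: `inf {|⟪T x, x⟫_A| : ‖x‖_A = 1}`. -/
def cA {E : Type*} [NormedAddCommGroup E] [InnerProductSpace ℂ E]
    (A T : E →L[ℂ] E) : ℝ :=
  sInf {r | ∃ x, sNormA A x = 1 ∧ r = ‖sInnerA A (T x) x‖}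

/-- `T ∈ B_A(H)`, i.e. the range of `T* A` is contained in the range of `A`. -/
def memBA {E : Type*} [NormedAddCommGroup E] [InnerProductSpace ℂ E] [CompleteSpace E]
    (A T : E →L[ℂ] E) : Prop :=
  Set.range ((adjoint T) ∘L A) ⊆ Set.range A

/-- `S` is the distinguished `A`-adjoint `T^{#_A}` of `T`:
`A ∘ S = T* ∘ A` and `R(S) ⊆ closure (R(A))`. -/
def IsSharpA {E : Type*} [NormedAddCommGroup E] [InnerProductSpace ℂ E] [CompleteSpace E]
    (A T S : E →L[ℂ] E) : Prop :=
  A ∘L S = (adjoint T) ∘L A ∧ Set.range S ⊆ closure (Set.range A)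

/-- The `2 × 2` operator matrix `[[X, Y], [Z, W]]` acting blockwise on
the Hilbert space direct sum `H ⊕ H`. -/
def blk2 {H : Type*} [NormedAddCommGroup H] [InnerProductSpace ℂ H]
    (X Y Z W : H →L[ℂ] H) : WithLp 2 (H × H) →L[ℂ] WithLp 2 (H × H) :=
  ((WithLp.prodContinuousLinearEquiv 2 ℂ H H).symm : (H × H) →L[ℂ] WithLp 2 (H × H)) ∘L
    ((X ∘L ContinuousLinearMap.fst ℂ H H + Y ∘L ContinuousLinearMap.snd ℂ H H).prod
      (Z ∘L ContinuousLinearMap.fst ℂ H H + W ∘L ContinuousLinearMap.snd ℂ H H)) ∘L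
    ((WithLp.prodContinuousLinearEquiv 2 ℂ H H) : WithLp 2 (H × H) →L[ℂ] H × H)

/-!
For a unit vector `z`, `⟪(Q S♯ ± S Q) z, z⟫_A = ⟪Q (S♯ z), z⟫_A ± ⟪Q z, S♯ z⟫_A`, and polarization
together with the parallelogram law gives `|⟪Q u, v⟫_A + ⟪Q v, u⟫_A| ≤ 2 w_A(Q) ‖u‖_A ‖v‖_A`;
the minus sign is absorbed by replacing `z` with `i z` in the second slot. Since `‖S♯ z‖_A ≤ ‖S‖_A`,
both bounds follow.

The suprema `w_A(Q)` and `‖S‖_A` are finite because `Q` and `S` are `A`-bounded: `Q ∈ B_A(H)` has an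
`A`-adjoint `Q'` by the closed graph theorem, and for the `A`-symmetric operator `R = Q' Q`,
iterating `‖R^m x‖_A² ≤ ‖x‖_A ‖R^(2m) x‖_A` shows `‖R x‖_A ≤ ‖R‖ ‖x‖_A`.
-/

lemma pow_two_pow_le_of_sq_le_succ {g : ℕ → ℝ} (h0 : 0 ≤ g 0) (h : ∀ k, g k ^ 2 ≤ g (k + 1))
    (k : ℕ) : g 0 ^ 2 ^ k ≤ g k := by
  induction k with
  | zero => simp
  | succ k ih =>
    calc g 0 ^ 2 ^ (k + 1) = (g 0 ^ 2 ^ k) ^ 2 := by rw [pow_succ, pow_mul]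
      _ ≤ g k ^ 2 := pow_le_pow_left₀ (by positivity) ih 2
      _ ≤ g (k + 1) := h k

lemma le_of_forall_pow_two_pow_le {b r M : ℝ} (hr : 0 ≤ r)
    (h : ∀ k : ℕ, b ^ 2 ^ k ≤ M * r ^ 2 ^ k) : b ≤ r := by
  rcases hr.eq_or_lt with rfl | hr
  · simpa using h 0
  by_contra! hrb
  have hq : 1 < b / r := (one_lt_div hr).mpr hrb
  obtain ⟨k, hk⟩ := pow_unbounded_of_one_lt M hq
  have hM : (b / r) ^ 2 ^ k ≤ M := by
    rw [div_pow, div_le_iff₀ (by positivity)]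
    exact h k
  exact hk.not_ge ((pow_le_pow_right₀ hq.le (Nat.lt_two_pow_self).le).trans hM)

theorem ContinuousLinearMap.exists_comp_eq_of_range_subset {𝕜 E F G : Type*} [RCLike 𝕜]
    [NormedAddCommGroup E] [InnerProductSpace 𝕜 E] [CompleteSpace E]
    [NormedAddCommGroup F] [NormedSpace 𝕜 F] [CompleteSpace F]
    [NormedAddCommGroup G] [NormedSpace 𝕜 G] {A : E →L[𝕜] G} {B : F →L[𝕜] G}
    (h : Set.range B ⊆ Set.range A) : ∃ C : F →L[𝕜] E, A ∘L C = B := by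
  set K := LinearMap.ker (A : E →ₗ[𝕜] G)
  have : CompleteSpace K := (isClosed_ker A).completeSpace_coe
  -- `C x` is the unique preimage of `B x` in `Kᗮ`; its graph is closed, so `C` is bounded.
  have hex : ∀ x, ∃ y ∈ Kᗮ, A y = B x := fun x ↦ by
    obtain ⟨y₀, hy₀⟩ := h (Set.mem_range_self x)
    obtain ⟨k, hk, y, hy, rfl⟩ := K.exists_add_mem_mem_orthogonal y₀
    exact ⟨y, hy, by rwa [map_add, show A k = 0 from hk, zero_add] at hy₀⟩
  have huniq : ∀ y y', y ∈ Kᗮ → y' ∈ Kᗮ → A y = A y' → y = y' := fun y y' hy hy' hAy ↦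
    sub_eq_zero.mp <| (Submodule.disjoint_def.mp K.orthogonal_disjoint) _
      (LinearMap.mem_ker.mpr (by simp [hAy])) (Kᗮ.sub_mem hy hy')
  choose C hCK hCA using hex
  let C' : F →ₗ[𝕜] E :=
    { toFun := C
      map_add' := fun x x' ↦ huniq _ _ (hCK _) (Kᗮ.add_mem (hCK x) (hCK x')) (by simp [hCA])
      map_smul' := fun c x ↦ huniq _ _ (hCK _) (Kᗮ.smul_mem c (hCK x)) (by simp [hCA]) }
  have hgraph : (C'.graph : Set (F × E)) = {p | p.2 ∈ Kᗮ ∧ A p.2 = B p.1} := by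
    ext ⟨x, y⟩
    simp only [SetLike.mem_coe, LinearMap.mem_graph_iff, Set.mem_ofPred_eq]
    exact ⟨by rintro rfl; exact ⟨hCK x, hCA x⟩,
      fun ⟨hy, hAy⟩ ↦ huniq _ _ hy (hCK x) (hAy.trans (hCA x).symm)⟩
  have hclosed : IsClosed (C'.graph : Set (F × E)) := by
    rw [hgraph]
    exact (K.isClosed_orthogonal.preimage continuous_snd).inter
      (isClosed_eq (A.continuous.comp continuous_snd) (B.continuous.comp continuous_fst))
  exact ⟨⟨C', C'.continuous_of_isClosed_graph hclosed⟩, ContinuousLinearMap.ext hCA⟩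

section SemiInner

variable {H : Type*} [NormedAddCommGroup H] [InnerProductSpace ℂ H] {A T : H →L[ℂ] H}

lemma sInnerA_add_left (x y z : H) : sInnerA A (x + y) z = sInnerA A x z + sInnerA A y z := by
  simp [sInnerA]

lemma sInnerA_add_right (x y z : H) : sInnerA A x (y + z) = sInnerA A x y + sInnerA A x z := by
  simp [sInnerA]

lemma sInnerA_sub_left (x y z : H) : sInnerA A (x - y) z = sInnerA A x z - sInnerA A y z := by
  simp [sInnerA]

lemma sInnerA_sub_right (x y z : H) : sInnerA A x (y - z) = sInnerA A x y - sInnerA A x z := by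
  simp [sInnerA]

lemma sInnerA_smul_left (a : ℂ) (x y : H) :
    sInnerA A (a • x) y = (starRingEnd ℂ) a * sInnerA A x y := by
  simp [sInnerA, mul_comm]

lemma sInnerA_smul_right (a : ℂ) (x y : H) : sInnerA A x (a • y) = a * sInnerA A x y := by
  simp [sInnerA]

lemma sNormA_nonneg (x : H) : 0 ≤ sNormA A x := Real.sqrt_nonneg _

lemma sNormA_le_sqrt_norm_mul (x : H) : sNormA A x ≤ √‖A‖ * ‖x‖ := by
  rw [sNormA, ← Real.sqrt_sq (norm_nonneg x), ← Real.sqrt_mul (norm_nonneg A)]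
  gcongr
  calc (sInnerA A x x).re ≤ ‖A x‖ * ‖x‖ := (Complex.re_le_norm _).trans (norm_inner_le_norm _ _)
    _ ≤ ‖A‖ * ‖x‖ ^ 2 := by
      rw [sq, ← mul_assoc]; exact mul_le_mul_of_nonneg_right (A.le_opNorm x) (norm_nonneg x)

lemma sInnerA_pow_apply_left {R : H →L[ℂ] H} (hR : ∀ x y, sInnerA A (R x) y = sInnerA A x (R y))
    (m : ℕ) (x y : H) : sInnerA A ((R ^ m) x) y = sInnerA A x ((R ^ m) y) := by
  induction m generalizing x y with
  | zero => rfl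
  | succ m ih =>
    calc sInnerA A ((R ^ (m + 1)) x) y = sInnerA A ((R ^ m) (R x)) y := by
          rw [pow_succ, mul_apply_eq_comp]
      _ = sInnerA A x (R ((R ^ m) y)) := by rw [ih, hR]
      _ = sInnerA A x ((R ^ (m + 1)) y) := by rw [pow_succ', mul_apply_eq_comp]

lemma wA_nonneg : 0 ≤ wA A T :=
  Real.sSup_nonneg (by rintro _ ⟨x, -, rfl⟩; exact norm_nonneg _)

lemma opNormA_nonneg : 0 ≤ opNormA A T :=
  Real.sSup_nonneg (by rintro _ ⟨x, -, -, rfl⟩; exact sNormA_nonneg _)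

lemma wA_le {c : ℝ} (hc : 0 ≤ c) (h : ∀ x, sNormA A x = 1 → ‖sInnerA A (T x) x‖ ≤ c) :
    wA A T ≤ c :=
  Real.sSup_le (by rintro _ ⟨x, hx, rfl⟩; exact h x hx) hc

variable (hA : A.IsPositive)
include hA

lemma conj_sInnerA (x y : H) : (starRingEnd ℂ) (sInnerA A y x) = sInnerA A x y := by
  rw [sInnerA, inner_conj_symm, sInnerA, hA.inner_left_eq_inner_right]

-- `sNormA A` is definitionally the seminorm of this core, whence Cauchy–Schwarz and homogeneity.
abbrev sInnerACore : PreInnerProductSpace.Core ℂ H where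
  inner := sInnerA A
  conj_inner_symm := conj_sInnerA hA
  re_inner_nonneg := hA.re_inner_nonneg_left
  add_left := sInnerA_add_left
  smul_left x y a := sInnerA_smul_left a x y

lemma norm_sInnerA_le (x y : H) : ‖sInnerA A x y‖ ≤ sNormA A x * sNormA A y :=
  @InnerProductSpace.Core.norm_inner_le_norm ℂ H _ _ _ (sInnerACore hA) x y

lemma sNormA_smul (a : ℂ) (x : H) : sNormA A (a • x) = ‖a‖ * sNormA A x :=
  @SeminormedSpace.Core.norm_smul ℂ H _ _
    (@InnerProductSpace.Core.toNorm ℂ H _ _ _ (sInnerACore hA)) _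
    (InnerProductSpace.Core.toSeminormedSpaceCore (sInnerACore hA)) a x

lemma sNormA_sq (x : H) : sNormA A x ^ 2 = (sInnerA A x x).re :=
  Real.sq_sqrt (hA.re_inner_nonneg_left x)

lemma sNormA_inv_smul_self {x : H} (hx : sNormA A x ≠ 0) :
    sNormA A ((sNormA A x : ℂ)⁻¹ • x) = 1 := by
  rw [sNormA_smul hA, norm_inv, Complex.norm_real, Real.norm_of_nonneg (sNormA_nonneg x),
    inv_mul_cancel₀ hx]

lemma sNormA_pow_apply_sq_le {R : H →L[ℂ] H}
    (hR : ∀ x y, sInnerA A (R x) y = sInnerA A x (R y)) (m : ℕ) (x : H) :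
    sNormA A ((R ^ m) x) ^ 2 ≤ sNormA A x * sNormA A ((R ^ (m + m)) x) := by
  rw [sNormA_sq hA, sInnerA_pow_apply_left hR, ← mul_apply_eq_comp, ← pow_add]
  exact (Complex.re_le_norm _).trans (norm_sInnerA_le hA _ _)

lemma sNormA_apply_le_of_symm {R : H →L[ℂ] H}
    (hR : ∀ x y, sInnerA A (R x) y = sInnerA A x (R y)) (x : H) :
    sNormA A (R x) ≤ ‖R‖ * sNormA A x := by
  rcases (sNormA_nonneg x).eq_or_lt with hx | hx
  · have h := sNormA_pow_apply_sq_le hA hR 1 x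
    rw [← hx, zero_mul, pow_one] at h
    rw [← hx, mul_zero]
    nlinarith [sNormA_nonneg (A := A) (R x)]
  set g : ℕ → ℝ := fun k ↦ sNormA A ((R ^ 2 ^ k) x) / sNormA A x
  have hg : ∀ k, g k ^ 2 ≤ g (k + 1) := fun k ↦ by
    have h := sNormA_pow_apply_sq_le hA hR (2 ^ k) x
    rw [← two_mul, ← pow_succ'] at h
    simp only [g, div_pow]
    rw [div_le_div_iff₀ (by positivity) hx, sq (sNormA A x), ← mul_assoc]
    exact mul_le_mul_of_nonneg_right (by linarith) hx.le
  have hbound : ∀ k, g 0 ^ 2 ^ k ≤ (√‖A‖ * ‖x‖ / sNormA A x) * ‖R‖ ^ 2 ^ k := fun k ↦ by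
    refine (pow_two_pow_le_of_sq_le_succ (div_nonneg (sNormA_nonneg _) hx.le) hg k).trans ?_
    simp only [g]
    rw [div_mul_eq_mul_div]
    gcongr
    calc sNormA A ((R ^ 2 ^ k) x) ≤ √‖A‖ * (‖R ^ 2 ^ k‖ * ‖x‖) :=
          (sNormA_le_sqrt_norm_mul _).trans (by gcongr; exact le_opNorm _ _)
      _ ≤ √‖A‖ * ‖x‖ * ‖R‖ ^ 2 ^ k := by
          rw [mul_comm ‖R ^ 2 ^ k‖, ← mul_assoc]; gcongr; exact norm_pow_le' R (Nat.two_pow_pos k)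
  have h := le_of_forall_pow_two_pow_le (norm_nonneg R) hbound
  simp only [g, pow_zero, pow_one] at h
  rwa [div_le_iff₀ hx] at h

section ABounded

variable {c : ℝ} (hT : ∀ x, sNormA A (T x) ≤ c * sNormA A x)
include hT

lemma norm_sInnerA_apply_le (x y : H) : ‖sInnerA A (T x) y‖ ≤ c * sNormA A x * sNormA A y :=
  (norm_sInnerA_le hA _ _).trans (mul_le_mul_of_nonneg_right (hT x) (sNormA_nonneg y))

lemma norm_sInnerA_apply_self_le (x : H) : ‖sInnerA A (T x) x‖ ≤ wA A T * sNormA A x ^ 2 := by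
  rcases eq_or_ne (sNormA A x) 0 with hx | hx
  · simpa [hx] using norm_sInnerA_apply_le hA hT x x
  have hpos := (sNormA_nonneg x).lt_of_ne' hx
  have hbdd : BddAbove {r | ∃ x, sNormA A x = 1 ∧ r = ‖sInnerA A (T x) x‖} :=
    ⟨c, by rintro _ ⟨y, hy, rfl⟩; simpa [hy] using norm_sInnerA_apply_le hA hT y y⟩
  have h := le_csSup hbdd ⟨_, sNormA_inv_smul_self hA hx, rfl⟩
  rw [map_smul, sInnerA_smul_left, sInnerA_smul_right, norm_mul, norm_mul, RCLike.norm_conj,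
    norm_inv, Complex.norm_real, Real.norm_of_nonneg (sNormA_nonneg x), ← mul_assoc,
    ← mul_inv, inv_mul_le_iff₀ (mul_pos hpos hpos)] at h
  exact h.trans_eq (by rw [wA]; ring)

lemma sNormA_apply_le_opNormA {x : H} (hx : x ∈ closure (Set.range A)) :
    sNormA A (T x) ≤ opNormA A T * sNormA A x := by
  rcases eq_or_ne (sNormA A x) 0 with h0 | h0
  · simpa [h0] using hT x
  have hbdd : BddAbove {r | ∃ x ∈ closure (Set.range A), sNormA A x = 1 ∧ r = sNormA A (T x)} :=
    ⟨c, by rintro _ ⟨y, -, hy, rfl⟩; simpa [hy] using hT y⟩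
  have hmem : (sNormA A x : ℂ)⁻¹ • x ∈ closure (Set.range A) :=
    map_mem_closure (continuous_const_smul _) hx (by rintro _ ⟨y, rfl⟩; exact ⟨_, map_smul A _ y⟩)
  have h := le_csSup hbdd ⟨_, hmem, sNormA_inv_smul_self hA h0, rfl⟩
  rw [map_smul, sNormA_smul hA, norm_inv, Complex.norm_real, Real.norm_of_nonneg (sNormA_nonneg x),
    inv_mul_le_iff₀ ((sNormA_nonneg x).lt_of_ne' h0)] at h
  exact h.trans_eq (by rw [opNormA]; ring)

lemma norm_sInnerA_add_swap_le_wA_mul (u v : H) :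
    ‖sInnerA A (T u) v + sInnerA A (T v) u‖ ≤ wA A T * (sNormA A u ^ 2 + sNormA A v ^ 2) := by
  have polarization : 2 * (sInnerA A (T u) v + sInnerA A (T v) u) =
      sInnerA A (T (u + v)) (u + v) - sInnerA A (T (u - v)) (u - v) := by
    simp only [map_add, map_sub, sInnerA_add_left, sInnerA_add_right, sInnerA_sub_left,
      sInnerA_sub_right]
    ring
  have parallelogram : sNormA A (u + v) ^ 2 + sNormA A (u - v) ^ 2 =
      2 * (sNormA A u ^ 2 + sNormA A v ^ 2) := by
    simp only [sNormA_sq hA, sInnerA_add_left, sInnerA_add_right, sInnerA_sub_left,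
      sInnerA_sub_right, Complex.add_re, Complex.sub_re]
    ring
  have h : 2 * ‖sInnerA A (T u) v + sInnerA A (T v) u‖ ≤
      2 * (wA A T * (sNormA A u ^ 2 + sNormA A v ^ 2)) :=
    calc 2 * ‖sInnerA A (T u) v + sInnerA A (T v) u‖
        = ‖sInnerA A (T (u + v)) (u + v) - sInnerA A (T (u - v)) (u - v)‖ := by
          rw [← polarization, norm_mul, Complex.norm_two]
      _ ≤ wA A T * sNormA A (u + v) ^ 2 + wA A T * sNormA A (u - v) ^ 2 :=
          (norm_sub_le _ _).trans (add_le_add (norm_sInnerA_apply_self_le hA hT _)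
            (norm_sInnerA_apply_self_le hA hT _))
      _ = 2 * (wA A T * (sNormA A u ^ 2 + sNormA A v ^ 2)) := by rw [← mul_add, parallelogram]; ring
  linarith

lemma norm_sInnerA_add_swap_le (u v : H) :
    ‖sInnerA A (T u) v + sInnerA A (T v) u‖ ≤ 2 * wA A T * (sNormA A u * sNormA A v) := by
  have hzero : ∀ u v, sNormA A u = 0 → sInnerA A (T u) v + sInnerA A (T v) u = 0 := by
    intro u v hu
    have h₁ := norm_sInnerA_apply_le hA hT u v
    have h₂ := norm_sInnerA_apply_le hA hT v u
    simp only [hu, mul_zero, zero_mul, norm_le_zero_iff] at h₁ h₂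
    rw [h₁, h₂, add_zero]
  rcases eq_or_ne (sNormA A u) 0 with hu | hu
  · simp [hzero u v hu, hu]
  rcases eq_or_ne (sNormA A v) 0 with hv | hv
  · simp [add_comm (sInnerA A (T u) v), hzero v u hv, hv]
  -- Rescaling `u` and `v` to unit vectors turns the bound `wA * (‖u‖² + ‖v‖²)` into `2 wA ‖u‖ ‖v‖`.
  have h := norm_sInnerA_add_swap_le_wA_mul hA hT ((sNormA A u : ℂ)⁻¹ • u) ((sNormA A v : ℂ)⁻¹ • v)
  rw [sNormA_inv_smul_self hA hu, sNormA_inv_smul_self hA hv, map_smul, map_smul,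
    sInnerA_smul_left, sInnerA_smul_right, sInnerA_smul_left, sInnerA_smul_right,
    map_inv₀, map_inv₀, Complex.conj_ofReal, Complex.conj_ofReal,
    show ∀ a b : ℂ, a⁻¹ * (b⁻¹ * sInnerA A (T u) v) + b⁻¹ * (a⁻¹ * sInnerA A (T v) u) =
      (a * b)⁻¹ * (sInnerA A (T u) v + sInnerA A (T v) u) from fun a b ↦ by ring,
    norm_mul, norm_inv, ← Complex.ofReal_mul, Complex.norm_real,
    Real.norm_of_nonneg (mul_nonneg (sNormA_nonneg u) (sNormA_nonneg v)),
    inv_mul_le_iff₀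
      (mul_pos ((sNormA_nonneg u).lt_of_ne' hu) ((sNormA_nonneg v).lt_of_ne' hv))] at h
  linarith

end ABounded

end SemiInner

section Adjoint

variable {H : Type*} [NormedAddCommGroup H] [InnerProductSpace ℂ H] [CompleteSpace H]
  {A S Ss T Ts : H →L[ℂ] H}

lemma sInnerA_apply_left_of_comp_eq (h : A ∘L Ts = adjoint T ∘L A) (x y : H) :
    sInnerA A (Ts x) y = sInnerA A x (T y) := by
  rw [sInnerA, ← comp_apply, h, comp_apply, adjoint_inner_left, sInnerA]

variable (hA : A.IsPositive)
include hA

lemma sInnerA_apply_right_of_comp_eq (h : A ∘L Ts = adjoint T ∘L A) (x y : H) :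
    sInnerA A (T x) y = sInnerA A x (Ts y) := by
  rw [← conj_sInnerA hA, ← sInnerA_apply_left_of_comp_eq h, conj_sInnerA hA]

lemma sNormA_apply_le_of_comp_eq (h : A ∘L Ts = adjoint T ∘L A) (x : H) :
    sNormA A (T x) ≤ √‖Ts ∘L T‖ * sNormA A x := by
  have hsymm : ∀ x y, sInnerA A ((Ts ∘L T) x) y = sInnerA A x ((Ts ∘L T) y) := fun x y ↦ by
    rw [comp_apply, comp_apply, sInnerA_apply_left_of_comp_eq h,
      sInnerA_apply_right_of_comp_eq hA h]
  rw [← Real.sqrt_sq (sNormA_nonneg x), ← Real.sqrt_mul (norm_nonneg _),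
    Real.le_sqrt (sNormA_nonneg _) (by positivity), sNormA_sq hA,
    sInnerA_apply_right_of_comp_eq hA h, ← comp_apply]
  calc (sInnerA A x ((Ts ∘L T) x)).re ≤ sNormA A x * sNormA A ((Ts ∘L T) x) :=
        (Complex.re_le_norm _).trans (norm_sInnerA_le hA _ _)
    _ ≤ sNormA A x * (‖Ts ∘L T‖ * sNormA A x) := by
        gcongr
        · exact sNormA_nonneg x
        · exact sNormA_apply_le_of_symm hA hsymm x
    _ = ‖Ts ∘L T‖ * sNormA A x ^ 2 := by ring

lemma exists_sNormA_apply_le_of_memBA (hT : memBA A T) :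
    ∃ c, ∀ x, sNormA A (T x) ≤ c * sNormA A x := by
  obtain ⟨Ts, hTs⟩ := exists_comp_eq_of_range_subset hT
  exact ⟨_, sNormA_apply_le_of_comp_eq hA hTs⟩

lemma sNormA_apply_le_opNormA_of_isSharpA (hSs : IsSharpA A S Ss) (x : H) :
    sNormA A (Ss x) ≤ opNormA A S * sNormA A x := by
  have hS := sNormA_apply_le_of_comp_eq hA hSs.1
  have h : sNormA A (Ss x) ^ 2 ≤ opNormA A S * sNormA A x * sNormA A (Ss x) := by
    rw [sNormA_sq hA, sInnerA_apply_left_of_comp_eq hSs.1]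
    calc (sInnerA A x (S (Ss x))).re ≤ sNormA A x * sNormA A (S (Ss x)) :=
          (Complex.re_le_norm _).trans (norm_sInnerA_le hA _ _)
      _ ≤ sNormA A x * (opNormA A S * sNormA A (Ss x)) := by
          gcongr
          · exact sNormA_nonneg x
          · exact sNormA_apply_le_opNormA hA hS (hSs.2 ⟨x, rfl⟩)
      _ = opNormA A S * sNormA A x * sNormA A (Ss x) := by ring
  rcases (sNormA_nonneg (Ss x)).eq_or_lt with h0 | hpos
  · rw [← h0]
    exact mul_nonneg opNormA_nonneg (sNormA_nonneg x)
  · rw [sq] at h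
    exact le_of_mul_le_mul_right h hpos

lemma norm_sInnerA_sharp_add_swap_le {Q : H →L[ℂ] H} {c : ℝ}
    (hQ : ∀ x, sNormA A (Q x) ≤ c * sNormA A x) (hSs : IsSharpA A S Ss) (z w : H) :
    ‖sInnerA A (Q (Ss z)) w + sInnerA A (Q w) (Ss z)‖ ≤
      2 * opNormA A S * wA A Q * (sNormA A z * sNormA A w) := by
  refine (norm_sInnerA_add_swap_le hA hQ _ _).trans ?_
  have hSs_le := sNormA_apply_le_opNormA_of_isSharpA hA hSs z
  have hw := sNormA_nonneg (A := A) w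
  have hQ_nonneg := wA_nonneg (A := A) (T := Q)
  calc 2 * wA A Q * (sNormA A (Ss z) * sNormA A w)
      ≤ 2 * wA A Q * (opNormA A S * sNormA A z * sNormA A w) := by gcongr
    _ = 2 * opNormA A S * wA A Q * (sNormA A z * sNormA A w) := by ring

end Adjoint

theorem stmt7_general {H : Type*} [NormedAddCommGroup H] [InnerProductSpace ℂ H] [CompleteSpace H]
    (A : H →L[ℂ] H) (hA : A.IsPositive)
    (Q S Ss : H →L[ℂ] H) (hQ : memBA A Q) (hSs : IsSharpA A S Ss) :
    wA A (Q ∘L Ss + S ∘L Q) ≤ 2 * opNormA A S * wA A Q ∧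
      wA A (Q ∘L Ss - S ∘L Q) ≤ 2 * opNormA A S * wA A Q := by
  obtain ⟨c, hQc⟩ := exists_sNormA_apply_le_of_memBA hA hQ
  have key := norm_sInnerA_sharp_add_swap_le hA hQc hSs
  have hshift := sInnerA_apply_right_of_comp_eq hA hSs.1
  have hbound : 0 ≤ 2 * opNormA A S * wA A Q :=
    mul_nonneg (mul_nonneg zero_le_two opNormA_nonneg) wA_nonneg
  refine ⟨wA_le hbound fun z hz ↦ ?_, wA_le hbound fun z hz ↦ ?_⟩
  · have e : sInnerA A ((Q ∘L Ss + S ∘L Q) z) z =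
        sInnerA A (Q (Ss z)) z + sInnerA A (Q z) (Ss z) := by
      rw [add_apply, comp_apply, comp_apply, sInnerA_add_left, hshift]
    rw [e]
    simpa [hz] using key z z
  · have e : sInnerA A ((Q ∘L Ss - S ∘L Q) z) z =
        -Complex.I * (sInnerA A (Q (Ss z)) (Complex.I • z) +
          sInnerA A (Q (Complex.I • z)) (Ss z)) := by
      rw [sub_apply, comp_apply, comp_apply, sInnerA_sub_left, hshift, map_smul,
        sInnerA_smul_left, sInnerA_smul_right, Complex.conj_I]
      linear_combination (sInnerA A (Q (Ss z)) z - sInnerA A (Q z) (Ss z)) * Complex.I_sq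
    rw [e, norm_mul, norm_neg, Complex.norm_I, one_mul]
    simpa [hz, sNormA_smul hA] using key z (Complex.I • z)

theorem stmt7 {H : Type*} [NormedAddCommGroup H] [InnerProductSpace ℂ H] [CompleteSpace H]
    (A : H →L[ℂ] H) (hA : A.IsPositive)
    (Q S Ss : H →L[ℂ] H) (hQ : memBA A Q) (hS : memBA A S) (hSs : IsSharpA A S Ss) :
    wA A (Q ∘L Ss + S ∘L Q) ≤ 2 * opNormA A S * wA A Q ∧
      wA A (Q ∘L Ss - S ∘L Q) ≤ 2 * opNormA A S * wA A Q :=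
  stmt7_general A hA Q S Ss hQ hSs
end
end

section
/- Let T₁, T₂ ∈ B_A(H) and set P = T₁^{#_A}T₁ + T₂T₂^{#_A}. Then w_𝔸([[O, T₁],[T₂, O]])⁴ ≤ (1/16)‖P‖_A² + (1/4)w_A(T₂T₁)² + (1/8)w_A(P T₂T₁ + T₂T₁ P). -/
/-!
Write `x = (x₁, x₂)` with `‖x₁‖_A² + ‖x₂‖_A² = 1`, `P = T₁^♯T₁ + T₂T₂^♯`, `W = T₂T₁` and
`G = PW + WP`. Then `⟨Tx, x⟩_𝔸 = ⟨T₁x₂, x₁⟩_A + conj ⟨T₂^♯x₂, x₁⟩_A`; rotating both terms by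
unimodular scalars and applying Cauchy–Schwarz gives
`|⟨Tx, x⟩_𝔸|² ≤ ‖x₁‖_A² (⟨Px₂, x₂⟩_A + 2|⟨Wx₂, x₂⟩_A|)`.

For the second factor pick `|u| = 1` with `ū⟨Wy, y⟩_A = |⟨Wy, y⟩_A|`, and let `D = uW + ūW^♯`,
`X = P + D`; both are `A`-selfadjoint, `⟨Xy, y⟩_A = ⟨Py, y⟩_A + 2|⟨Wy, y⟩_A|` and
`⟨Xy, y⟩_A² ≤ ‖X²y‖_A ‖y‖_A³`, where `X² = P² + D² + (uG + ūG^♯)`. By polarization an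
`A`-selfadjoint operator is `‖·‖_A`-bounded by the bound of its quadratic form, so
`‖D‖_A ≤ 2 w_A(W)` and `‖uG + ūG^♯‖_A ≤ 2 w_A(G)`. Hence
`(⟨Py, y⟩_A + 2|⟨Wy, y⟩_A|)² ≤ (‖P‖_A² + 4 w_A(W)² + 2 w_A(G)) ‖y‖_A⁴`, and
`‖x₁‖_A⁴ ‖x₂‖_A⁴ ≤ 1/16` finishes the proof.
-/

noncomputable section

open ContinuousLinearMap

open scoped InnerProductSpace ComplexConjugate
open RCLike

lemma Complex.exists_norm_eq_one_conj_mul_eq_norm (z : ℂ) :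
    ∃ u : ℂ, ‖u‖ = 1 ∧ conj u * z = ‖z‖ := by
  refine ⟨Complex.exp (z.arg * Complex.I), Complex.norm_exp_ofReal_mul_I _, ?_⟩
  conv_lhs => rw [← Complex.norm_mul_exp_arg_mul_I z]
  rw [← Complex.exp_conj, map_mul, Complex.conj_ofReal, Complex.conj_I, mul_left_comm,
    ← Complex.exp_add]
  simp

lemma le_of_forall_pow_two_pow_mul_le {a b c C : ℝ} (hb : 0 ≤ b) (hc : 0 < c)
    (h : ∀ k : ℕ, a ^ 2 ^ k * c ≤ C * b ^ 2 ^ k) : a ≤ b := by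
  by_contra! hba
  rcases hb.eq_or_lt with rfl | hb
  · have := h 0
    simp only [pow_zero, pow_one, mul_zero] at this
    nlinarith
  · obtain ⟨n, hn⟩ := pow_unbounded_of_one_lt (C / c) ((one_lt_div hb).2 hba)
    have hle : (a / b) ^ n ≤ (a / b) ^ 2 ^ n :=
      pow_le_pow_right₀ ((one_lt_div hb).2 hba).le n.lt_two_pow_self.le
    have hk : (a / b) ^ 2 ^ n ≤ C / c := by
      rw [div_pow, div_le_div_iff₀ (by positivity) hc]
      linarith [h n]
    linarith

lemma le_mul_of_forall_two_mul_mul_sq_le {a b M : ℝ} (hb : 0 ≤ b) (hM : 0 ≤ M)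
    (h : ∀ t : ℝ, 2 * t * a ^ 2 ≤ M * (b ^ 2 + t ^ 2 * a ^ 2)) : a ≤ M * b := by
  rcases hM.eq_or_lt with rfl | hM
  · nlinarith [h 1]
  · have := h M⁻¹
    field_simp at this
    nlinarith [mul_nonneg hM.le hb]

lemma pow_four_le_div_sixteen {c a b s K : ℝ} (hK : 0 ≤ K) (hab : a ^ 2 + b ^ 2 = 1)
    (hc : c ^ 2 ≤ a ^ 2 * s) (hs : s ^ 2 ≤ K * b ^ 4) : c ^ 4 ≤ K / 16 := by
  have hab4 : (a * b) ^ 4 ≤ 1 / 16 := by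
    have : (a * b) ^ 2 ≤ 1 / 4 := by nlinarith [sq_nonneg (a ^ 2 - b ^ 2)]
    nlinarith [sq_nonneg (a * b)]
  calc c ^ 4 = (c ^ 2) ^ 2 := by ring
    _ ≤ (a ^ 2 * s) ^ 2 := pow_le_pow_left₀ (sq_nonneg c) hc 2
    _ = a ^ 4 * s ^ 2 := by ring
    _ ≤ a ^ 4 * (K * b ^ 4) := by gcongr
    _ = K * (a * b) ^ 4 := by ring
    _ ≤ K * (1 / 16) := by gcongr
    _ = K / 16 := by ring

lemma Real.sSup_pow_le {S : Set ℝ} {n : ℕ} (hn : n ≠ 0) {b : ℝ} (hb : 0 ≤ b)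
    (hS : ∀ r ∈ S, 0 ≤ r ∧ r ^ n ≤ b) : sSup S ^ n ≤ b := by
  have hsup : sSup S ≤ b ^ (n⁻¹ : ℝ) := Real.sSup_le (fun r hr => by
    rw [← Real.pow_rpow_inv_natCast (hS r hr).1 hn]
    exact Real.rpow_le_rpow (pow_nonneg (hS r hr).1 n) (hS r hr).2 (by positivity))
    (by positivity)
  calc sSup S ^ n ≤ (b ^ (n⁻¹ : ℝ)) ^ n :=
        pow_le_pow_left₀ (Real.sSup_nonneg fun r hr => (hS r hr).1) hsup n
    _ = b := Real.rpow_inv_natCast_pow hb hn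

lemma le_sqrt_mul_of_sq_le {a b K : ℝ} (hb : 0 ≤ b) (h : a ^ 2 ≤ K * b ^ 2) : a ≤ √K * b := by
  calc a ≤ √(K * b ^ 2) := Real.le_sqrt_of_sq_le h
    _ = √K * b := by rw [Real.sqrt_mul' _ (by positivity), Real.sqrt_sq hb]

lemma norm_add_eq_left_of_norm_eq_zero {E : Type*} [SeminormedAddCommGroup E] {a z : E}
    (hz : ‖z‖ = 0) : ‖a + z‖ = ‖a‖ :=
  le_antisymm ((norm_add_le a z).trans_eq (by rw [hz, add_zero]))
    (by simpa [hz] using norm_sub_norm_le a (-z))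

lemma ContinuousLinearMap.norm_pow_apply_le {𝕜 E : Type*} [NontriviallyNormedField 𝕜]
    [SeminormedAddCommGroup E] [NormedSpace 𝕜 E] (S : E →L[𝕜] E) (n : ℕ) (x : E) :
    ‖(S ^ n) x‖ ≤ ‖S‖ ^ n * ‖x‖ := by
  induction n with
  | zero => simp
  | succ n ih =>
    rw [pow_succ', pow_succ', mul_assoc]
    exact S.le_opNorm_of_le ih

section SemiInnerProductSpace

variable {E : Type*} [SeminormedAddCommGroup E] [InnerProductSpace ℂ E]

def AreAdjoint (T T' : E →ₗ[ℂ] E) : Prop := ∀ x y, ⟪T x, y⟫_ℂ = ⟪x, T' y⟫_ℂ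

namespace AreAdjoint

variable {S S' T T' : E →ₗ[ℂ] E}

lemma symm (h : AreAdjoint T T') : AreAdjoint T' T := fun x y => by
  rw [← inner_conj_symm, ← h, inner_conj_symm]

lemma comp (hS : AreAdjoint S S') (hT : AreAdjoint T T') : AreAdjoint (S ∘ₗ T) (T' ∘ₗ S') :=
  fun x y => by rw [LinearMap.comp_apply, hS, hT, LinearMap.comp_apply]

lemma add (hS : AreAdjoint S S') (hT : AreAdjoint T T') : AreAdjoint (S + T) (S' + T') :=
  fun x y => by simp only [LinearMap.add_apply, inner_add_left, inner_add_right, hS x y, hT x y]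

lemma isSymmetric_smul_add (h : AreAdjoint T T') (u : ℂ) :
    (u • T + conj u • T').IsSymmetric := fun x y => by
  simp only [LinearMap.add_apply, LinearMap.smul_apply, inner_add_left, inner_add_right,
    inner_smul_left, inner_smul_right, h x y, h.symm x y, Complex.conj_conj]
  ring

lemma re_inner_smul_add_apply_self (h : AreAdjoint T T') (u : ℂ) (x : E) :
    re ⟪(u • T + conj u • T') x, x⟫_ℂ = 2 * re (conj u * ⟪T x, x⟫_ℂ) := by
  have hT' : ⟪T' x, x⟫_ℂ = conj ⟪T x, x⟫_ℂ := by rw [h.symm, inner_conj_symm]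
  simp only [LinearMap.add_apply, LinearMap.smul_apply, inner_add_left, inner_smul_left,
    Complex.conj_conj, hT', map_add]
  rw [show u * conj ⟪T x, x⟫_ℂ = conj (conj u * ⟪T x, x⟫_ℂ) by simp, conj_re]
  ring

end AreAdjoint

namespace LinearMap.IsSymmetric

variable {S : E →ₗ[ℂ] E}

lemma norm_apply_sq_le (hS : S.IsSymmetric) (x : E) : ‖S x‖ ^ 2 ≤ ‖x‖ * ‖S (S x)‖ := by
  rw [← inner_self_eq_norm_sq (𝕜 := ℂ), hS]
  exact re_inner_le_norm _ _

lemma sq_re_inner_apply_self_le (hS : S.IsSymmetric) (x : E) :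
    (re ⟪S x, x⟫_ℂ) ^ 2 ≤ ‖x‖ ^ 3 * ‖S (S x)‖ :=
  calc (re ⟪S x, x⟫_ℂ) ^ 2 = |re ⟪S x, x⟫_ℂ| ^ 2 := (sq_abs _).symm
    _ ≤ (‖S x‖ * ‖x‖) ^ 2 := by
        gcongr; exact (abs_re_le_norm _).trans (norm_inner_le_norm _ _)
    _ = ‖S x‖ ^ 2 * ‖x‖ ^ 2 := mul_pow _ _ _
    _ ≤ ‖x‖ * ‖S (S x)‖ * ‖x‖ ^ 2 := by gcongr; exact hS.norm_apply_sq_le x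
    _ = ‖x‖ ^ 3 * ‖S (S x)‖ := by ring

lemma norm_apply_pow_two_pow_mul_le (hS : S.IsSymmetric) (x : E) (k : ℕ) :
    ‖S x‖ ^ 2 ^ k * ‖x‖ ≤ ‖(S ^ 2 ^ k) x‖ * ‖x‖ ^ 2 ^ k := by
  induction k with
  | zero => simp [mul_comm]
  | succ k ih =>
    set m := 2 ^ k
    have hsq : ‖(S ^ m) x‖ ^ 2 ≤ ‖x‖ * ‖(S ^ (2 ^ (k + 1))) x‖ := by
      rw [show S ^ 2 ^ (k + 1) = S ^ m * S ^ m by rw [← pow_add, pow_succ, mul_two],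
        Module.End.mul_apply]
      exact (hS.pow m).norm_apply_sq_le x
    have key : ‖x‖ * (‖S x‖ ^ 2 ^ (k + 1) * ‖x‖) ≤
        ‖x‖ * (‖(S ^ 2 ^ (k + 1)) x‖ * ‖x‖ ^ 2 ^ (k + 1)) := by
      calc ‖x‖ * (‖S x‖ ^ 2 ^ (k + 1) * ‖x‖) = (‖S x‖ ^ m * ‖x‖) ^ 2 := by ring
        _ ≤ (‖(S ^ m) x‖ * ‖x‖ ^ m) ^ 2 := pow_le_pow_left₀ (by positivity) ih 2
        _ = ‖(S ^ m) x‖ ^ 2 * ‖x‖ ^ 2 ^ (k + 1) := by ring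
        _ ≤ ‖x‖ * ‖(S ^ (2 ^ (k + 1))) x‖ * ‖x‖ ^ 2 ^ (k + 1) := by gcongr
        _ = _ := by ring
    rcases (norm_nonneg x).eq_or_lt with hx | hx
    · rw [← hx]; simp
    · exact le_of_mul_le_mul_left key hx

lemma norm_apply_le_of_norm_pow_apply_le (hS : S.IsSymmetric) {x : E} {C K : ℝ} (hK : 0 ≤ K)
    (h : ∀ n : ℕ, ‖(S ^ n) x‖ ≤ C * K ^ n) : ‖S x‖ ≤ K * ‖x‖ := by
  rcases (norm_nonneg x).eq_or_lt with hx | hx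
  · have := hS.norm_apply_sq_le x
    rw [← hx, zero_mul] at this
    rw [← hx, mul_zero]
    exact pow_eq_zero_iff two_ne_zero |>.mp (le_antisymm this (by positivity)) |>.le
  refine le_of_forall_pow_two_pow_mul_le (C := C) (by positivity) hx fun k => ?_
  calc ‖S x‖ ^ 2 ^ k * ‖x‖ ≤ ‖(S ^ 2 ^ k) x‖ * ‖x‖ ^ 2 ^ k :=
        hS.norm_apply_pow_two_pow_mul_le x k
    _ ≤ C * K ^ 2 ^ k * ‖x‖ ^ 2 ^ k := by gcongr; exact h _
    _ = C * (K * ‖x‖) ^ 2 ^ k := by ring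

lemma norm_apply_le_of_abs_re_inner_le (hS : S.IsSymmetric) {M : ℝ} (hM : 0 ≤ M)
    (h : ∀ x, |re ⟪S x, x⟫_ℂ| ≤ M * ‖x‖ ^ 2) (x : E) : ‖S x‖ ≤ M * ‖x‖ := by
  refine le_mul_of_forall_two_mul_mul_sq_le (norm_nonneg x) hM fun t => ?_
  set z : E := (t : ℂ) • S x
  have hpol : re ⟪S (x + z), x + z⟫_ℂ - re ⟪S (x - z), x - z⟫_ℂ = 4 * t * ‖S x‖ ^ 2 := by
    have hz : ⟪S z, x⟫_ℂ = ⟪z, S x⟫_ℂ := hS z x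
    simp only [map_add, map_sub, inner_add_left, inner_add_right, inner_sub_left,
      inner_sub_right, hz]
    simp only [z, inner_smul_left, inner_smul_right, Complex.conj_ofReal,
      ← inner_self_eq_norm_sq (𝕜 := ℂ), RCLike.re_to_complex, Complex.re_ofReal_mul]
    ring
  have hpar : ‖x + z‖ ^ 2 + ‖x - z‖ ^ 2 = 2 * (‖x‖ ^ 2 + t ^ 2 * ‖S x‖ ^ 2) := by
    rw [norm_add_sq (𝕜 := ℂ), norm_sub_sq (𝕜 := ℂ), norm_smul, Complex.norm_real,
      Real.norm_eq_abs, mul_pow, sq_abs]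
    ring
  have h₁ := (abs_le.1 (h (x + z))).2
  have h₂ := (abs_le.1 (h (x - z))).1
  nlinarith

end LinearMap.IsSymmetric

namespace AreAdjoint

variable {T T' : E →ₗ[ℂ] E}

lemma norm_apply_le (h : AreAdjoint T T') {K : ℝ} (hK : ∀ x, ‖T' (T x)‖ ≤ K * ‖x‖) (x : E) :
    ‖T x‖ ≤ √K * ‖x‖ := by
  refine le_sqrt_mul_of_sq_le (norm_nonneg x) ?_
  calc ‖T x‖ ^ 2 ≤ ‖x‖ * ‖T' (T x)‖ := by
        rw [← inner_self_eq_norm_sq (𝕜 := ℂ), h]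
        exact re_inner_le_norm _ _
    _ ≤ ‖x‖ * (K * ‖x‖) := by gcongr; exact hK x
    _ = K * ‖x‖ ^ 2 := by ring

lemma norm_smul_add_apply_le (h : AreAdjoint T T') {u : ℂ} (hu : ‖u‖ = 1) {w : ℝ} (hw : 0 ≤ w)
    (hT : ∀ x, ‖⟪T x, x⟫_ℂ‖ ≤ w * ‖x‖ ^ 2) (x : E) :
    ‖(u • T + conj u • T') x‖ ≤ 2 * w * ‖x‖ := by
  refine (h.isSymmetric_smul_add u).norm_apply_le_of_abs_re_inner_le (by positivity) (fun z => ?_) x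
  rw [h.re_inner_smul_add_apply_self, abs_mul, abs_two, mul_assoc]
  gcongr
  calc |re (conj u * ⟪T z, z⟫_ℂ)| ≤ ‖conj u * ⟪T z, z⟫_ℂ‖ := abs_re_le_norm _
    _ = ‖⟪T z, z⟫_ℂ‖ := by rw [norm_mul, RCLike.norm_conj, hu, one_mul]
    _ ≤ w * ‖z‖ ^ 2 := hT z

end AreAdjoint

def numRadius (T : E →ₗ[ℂ] E) : ℝ := sSup {r | ∃ x, ‖x‖ = 1 ∧ r = ‖⟪T x, x⟫_ℂ‖}

lemma numRadius_nonneg (T : E →ₗ[ℂ] E) : 0 ≤ numRadius T :=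
  Real.sSup_nonneg fun _ ⟨_, _, hr⟩ => hr ▸ norm_nonneg _

-- Without the boundedness hypothesis the supremum could be the junk value of an unbounded `sSup`.
lemma norm_inner_apply_self_le_numRadius {T : E →ₗ[ℂ] E} (hT : ∃ C, ∀ x, ‖T x‖ ≤ C * ‖x‖)
    (x : E) : ‖⟪T x, x⟫_ℂ‖ ≤ numRadius T * ‖x‖ ^ 2 := by
  obtain ⟨C, hC⟩ := hT
  have hbdd : BddAbove {r | ∃ x, ‖x‖ = 1 ∧ r = ‖⟪T x, x⟫_ℂ‖} := by
    refine ⟨C, fun _ ⟨y, hy, hr⟩ => hr ▸ ?_⟩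
    calc ‖⟪T y, y⟫_ℂ‖ ≤ ‖T y‖ * ‖y‖ := norm_inner_le_norm _ _
      _ ≤ C * ‖y‖ * ‖y‖ := by gcongr; exact hC y
      _ = C := by rw [hy, mul_one, mul_one]
  rcases (norm_nonneg x).eq_or_lt with hx | hx
  · have := norm_inner_le_norm (𝕜 := ℂ) (T x) x
    rw [← hx, mul_zero] at this
    rw [← hx]
    simpa using this
  set y := ((‖x‖⁻¹ : ℝ) : ℂ) • x
  have hy : ‖y‖ = 1 := by
    rw [norm_smul, Complex.norm_real, norm_inv, norm_norm, inv_mul_cancel₀ hx.ne']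
  have hle : ‖⟪T y, y⟫_ℂ‖ ≤ numRadius T := le_csSup hbdd ⟨y, hy, rfl⟩
  rw [map_smul, inner_smul_left, inner_smul_right, norm_mul, norm_mul, RCLike.norm_conj,
    Complex.norm_real, norm_inv, norm_norm, ← mul_assoc, ← sq, inv_pow] at hle
  rwa [inv_mul_le_iff₀ (by positivity), mul_comm] at hle

lemma sq_norm_inner_add_norm_inner_le (p q x : E) :
    (‖⟪p, x⟫_ℂ‖ + ‖⟪q, x⟫_ℂ‖) ^ 2 ≤ (‖p‖ ^ 2 + ‖q‖ ^ 2 + 2 * ‖⟪p, q⟫_ℂ‖) * ‖x‖ ^ 2 := by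
  obtain ⟨μ, hμ, hμp⟩ := Complex.exists_norm_eq_one_conj_mul_eq_norm ⟪p, x⟫_ℂ
  obtain ⟨ν, hν, hνq⟩ := Complex.exists_norm_eq_one_conj_mul_eq_norm ⟪q, x⟫_ℂ
  set v := μ • p + ν • q
  have hv : ‖⟪p, x⟫_ℂ‖ + ‖⟪q, x⟫_ℂ‖ ≤ ‖v‖ * ‖x‖ := by
    have hvx : ⟪v, x⟫_ℂ = ((‖⟪p, x⟫_ℂ‖ + ‖⟪q, x⟫_ℂ‖ : ℝ) : ℂ) := by
      rw [inner_add_left, inner_smul_left, inner_smul_left, hμp, hνq]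
      push_cast; ring
    have := norm_inner_le_norm (𝕜 := ℂ) v x
    rwa [hvx, Complex.norm_real, Real.norm_of_nonneg (by positivity)] at this
  have hv2 : ‖v‖ ^ 2 ≤ ‖p‖ ^ 2 + ‖q‖ ^ 2 + 2 * ‖⟪p, q⟫_ℂ‖ := by
    have hcross : re ⟪μ • p, ν • q⟫_ℂ ≤ ‖⟪p, q⟫_ℂ‖ := by
      refine (re_le_norm _).trans_eq ?_
      rw [inner_smul_left, inner_smul_right, norm_mul, norm_mul, RCLike.norm_conj, hμ, hν]
      ring
    rw [norm_add_sq (𝕜 := ℂ), norm_smul, norm_smul, hμ, hν, one_mul, one_mul]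
    linarith
  calc (‖⟪p, x⟫_ℂ‖ + ‖⟪q, x⟫_ℂ‖) ^ 2 ≤ (‖v‖ * ‖x‖) ^ 2 := by gcongr
    _ = ‖v‖ ^ 2 * ‖x‖ ^ 2 := mul_pow _ _ _
    _ ≤ _ := by gcongr

lemma AreAdjoint.norm_inner_add_inner_sq_le {T₁ T₁' T₂ T₂' : E →ₗ[ℂ] E} (h₁ : AreAdjoint T₁ T₁')
    (h₂ : AreAdjoint T₂ T₂') (x₁ x₂ : E) :
    ‖⟪T₁ x₂, x₁⟫_ℂ + ⟪T₂ x₁, x₂⟫_ℂ‖ ^ 2 ≤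
      ‖x₁‖ ^ 2 * (re ⟪(T₁' ∘ₗ T₁ + T₂ ∘ₗ T₂') x₂, x₂⟫_ℂ + 2 * ‖⟪(T₂ ∘ₗ T₁) x₂, x₂⟫_ℂ‖) := by
  have hP : re ⟪(T₁' ∘ₗ T₁ + T₂ ∘ₗ T₂') x₂, x₂⟫_ℂ = ‖T₁ x₂‖ ^ 2 + ‖T₂' x₂‖ ^ 2 := by
    rw [LinearMap.add_apply, inner_add_left, map_add, LinearMap.comp_apply, LinearMap.comp_apply,
      h₁.symm, h₂, inner_self_eq_norm_sq, inner_self_eq_norm_sq]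
  have hW : ⟪(T₂ ∘ₗ T₁) x₂, x₂⟫_ℂ = ⟪T₁ x₂, T₂' x₂⟫_ℂ := h₂ _ _
  have hT₂ : ‖⟪T₂ x₁, x₂⟫_ℂ‖ = ‖⟪T₂' x₂, x₁⟫_ℂ‖ := by
    rw [h₂, ← inner_conj_symm, RCLike.norm_conj]
  rw [hP, hW]
  calc _ ≤ (‖⟪T₁ x₂, x₁⟫_ℂ‖ + ‖⟪T₂' x₂, x₁⟫_ℂ‖) ^ 2 := by
        rw [← hT₂]; gcongr; exact norm_add_le _ _
    _ ≤ _ := sq_norm_inner_add_norm_inner_le _ _ _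
    _ = _ := by ring

lemma LinearMap.IsSymmetric.sq_re_inner_add_two_mul_norm_inner_le {P W W' : E →ₗ[ℂ] E}
    (hP : P.IsSymmetric) (hW : AreAdjoint W W') {p w g : ℝ} (hp : 0 ≤ p) (hw : 0 ≤ w)
    (hg : 0 ≤ g) (hPp : ∀ x, ‖P x‖ ≤ p * ‖x‖) (hWw : ∀ x, ‖⟪W x, x⟫_ℂ‖ ≤ w * ‖x‖ ^ 2)
    (hGg : ∀ x, ‖⟪(P ∘ₗ W + W ∘ₗ P) x, x⟫_ℂ‖ ≤ g * ‖x‖ ^ 2) (y : E) :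
    (re ⟪P y, y⟫_ℂ + 2 * ‖⟪W y, y⟫_ℂ‖) ^ 2 ≤ (p ^ 2 + 4 * w ^ 2 + 2 * g) * ‖y‖ ^ 4 := by
  obtain ⟨u, hu, huW⟩ := Complex.exists_norm_eq_one_conj_mul_eq_norm ⟪W y, y⟫_ℂ
  have hP' : AreAdjoint P P := hP
  set D := u • W + conj u • W'
  have hD : ∀ x, ‖D x‖ ≤ 2 * w * ‖x‖ := hW.norm_smul_add_apply_le hu hw hWw
  have hPD : ∀ x, ‖(P ∘ₗ D + D ∘ₗ P) x‖ ≤ 2 * g * ‖x‖ := by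
    have hG := (hP'.comp hW).add (hW.comp hP')
    have : P ∘ₗ D + D ∘ₗ P = u • (P ∘ₗ W + W ∘ₗ P) + conj u • (W' ∘ₗ P + P ∘ₗ W') := by
      simp only [D, LinearMap.comp_add, LinearMap.add_comp, LinearMap.comp_smul,
        LinearMap.smul_comp, smul_add]
      abel
    rw [this]
    exact hG.norm_smul_add_apply_le hu hg hGg
  set X := P + D
  have hX : X.IsSymmetric := hP.add (hW.isSymmetric_smul_add u)
  have hXy : re ⟪X y, y⟫_ℂ = re ⟪P y, y⟫_ℂ + 2 * ‖⟪W y, y⟫_ℂ‖ := by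
    rw [LinearMap.add_apply, inner_add_left, map_add, hW.re_inner_smul_add_apply_self, huW]
    rfl
  have hXX : ‖X (X y)‖ ≤ (p ^ 2 + 4 * w ^ 2 + 2 * g) * ‖y‖ := by
    have : X (X y) = P (P y) + D (D y) + (P ∘ₗ D + D ∘ₗ P) y := by
      simp only [X, LinearMap.add_apply, map_add, LinearMap.comp_apply]
      abel
    rw [this]
    calc _ ≤ ‖P (P y)‖ + ‖D (D y)‖ + ‖(P ∘ₗ D + D ∘ₗ P) y‖ := norm_add₃_le
      _ ≤ p * (p * ‖y‖) + 2 * w * (2 * w * ‖y‖) + 2 * g * ‖y‖ := by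
          gcongr
          · exact (hPp _).trans (by gcongr; exact hPp y)
          · exact (hD _).trans (by gcongr; exact hD y)
          · exact hPD y
      _ = _ := by ring
  calc (re ⟪P y, y⟫_ℂ + 2 * ‖⟪W y, y⟫_ℂ‖) ^ 2 = (re ⟪X y, y⟫_ℂ) ^ 2 := by rw [hXy]
    _ ≤ ‖y‖ ^ 3 * ‖X (X y)‖ := hX.sq_re_inner_apply_self_le y
    _ ≤ ‖y‖ ^ 3 * ((p ^ 2 + 4 * w ^ 2 + 2 * g) * ‖y‖) := by gcongr
    _ = _ := by ring

theorem AreAdjoint.norm_inner_add_inner_pow_four_le {T₁ T₁' T₂ T₂' : E →ₗ[ℂ] E}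
    (h₁ : AreAdjoint T₁ T₁') (h₂ : AreAdjoint T₂ T₂') {p w g : ℝ} (hp : 0 ≤ p) (hw : 0 ≤ w)
    (hg : 0 ≤ g) (hPp : ∀ x, ‖(T₁' ∘ₗ T₁ + T₂ ∘ₗ T₂') x‖ ≤ p * ‖x‖)
    (hWw : ∀ x, ‖⟪(T₂ ∘ₗ T₁) x, x⟫_ℂ‖ ≤ w * ‖x‖ ^ 2)
    (hGg : ∀ x, ‖⟪((T₁' ∘ₗ T₁ + T₂ ∘ₗ T₂') ∘ₗ (T₂ ∘ₗ T₁) +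
      (T₂ ∘ₗ T₁) ∘ₗ (T₁' ∘ₗ T₁ + T₂ ∘ₗ T₂')) x, x⟫_ℂ‖ ≤ g * ‖x‖ ^ 2)
    {x₁ x₂ : E} (hx : ‖x₁‖ ^ 2 + ‖x₂‖ ^ 2 = 1) :
    ‖⟪T₁ x₂, x₁⟫_ℂ + ⟪T₂ x₁, x₂⟫_ℂ‖ ^ 4 ≤ 1 / 16 * p ^ 2 + 1 / 4 * w ^ 2 + 1 / 8 * g := by
  have hP : (T₁' ∘ₗ T₁ + T₂ ∘ₗ T₂').IsSymmetric := (h₁.symm.comp h₁).add (h₂.comp h₂.symm)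
  have := pow_four_le_div_sixteen (by positivity) hx (h₁.norm_inner_add_inner_sq_le h₂ x₁ x₂)
    (hP.sq_re_inner_add_two_mul_norm_inner_le (h₂.comp h₁) hp hw hg hPp hWw hGg x₂)
  linarith

end SemiInnerProductSpace

section BlockMatrix

variable {H : Type*} [NormedAddCommGroup H] [InnerProductSpace ℂ H]

lemma sInnerA_blk2_diag (A : H →L[ℂ] H) (x y : WithLp 2 (H × H)) :
    sInnerA (blk2 A 0 0 A) x y = sInnerA A x.fst y.fst + sInnerA A x.snd y.snd := by
  simp [sInnerA, blk2, WithLp.prod_inner_apply]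

lemma sInnerA_blk2_diag_offDiag (A T₁ T₂ : H →L[ℂ] H) (x : WithLp 2 (H × H)) :
    sInnerA (blk2 A 0 0 A) (blk2 0 T₁ T₂ 0 x) x =
      sInnerA A (T₁ x.snd) x.fst + sInnerA A (T₂ x.fst) x.snd := by
  rw [sInnerA_blk2_diag]
  simp [blk2]

end BlockMatrix

section SemiInnerProductOfPositive

variable {H : Type*} [NormedAddCommGroup H] [InnerProductSpace ℂ H]

lemma opNormA_nonneg_s12 (A P : H →L[ℂ] H) : 0 ≤ opNormA A P :=
  Real.sSup_nonneg fun _ ⟨_, _, _, hr⟩ => hr ▸ Real.sqrt_nonneg _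

/-- `H` equipped with the semi-inner product `⟪x, y⟫_A`, whose norm is `‖·‖_A`. -/
def WithA (_A : H →L[ℂ] H) : Type _ := H

namespace WithA

variable {A : H →L[ℂ] H}

instance : AddCommGroup (WithA A) := inferInstanceAs (AddCommGroup H)
instance : Module ℂ (WithA A) := inferInstanceAs (Module ℂ H)

def toA : H ≃ₗ[ℂ] WithA A := LinearEquiv.refl ℂ H

abbrev core (hA : A.IsPositive) : PreInnerProductSpace.Core ℂ (WithA A) where
  inner x y := sInnerA A (toA.symm x) (toA.symm y)
  conj_inner_symm x y := by
    rw [sInnerA, sInnerA, inner_conj_symm, hA.inner_left_eq_inner_right]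
  re_inner_nonneg x := hA.re_inner_nonneg_left _
  add_left x y z := by simp [sInnerA]
  smul_left x y r := by simp [sInnerA, mul_comm]

def lift (T : H →L[ℂ] H) : Module.End ℂ (WithA A) :=
  toA.toLinearMap ∘ₗ T.toLinearMap ∘ₗ toA.symm.toLinearMap

lemma lift_pow (S : H →L[ℂ] H) (n : ℕ) : (lift S : Module.End ℂ (WithA A)) ^ n = lift (S ^ n) := by
  induction n with
  | zero => rfl
  | succ n ih => rw [pow_succ, ih, pow_succ]; rfl

variable [hA : Fact A.IsPositive]

instance : SeminormedAddCommGroup (WithA A) :=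
  @InnerProductSpace.Core.toSeminormedAddCommGroup _ _ _ _ _ (core hA.out)
instance : InnerProductSpace ℂ (WithA A) := InnerProductSpace.ofCore (core hA.out)

lemma norm_toA_le (x : H) : ‖(toA x : WithA A)‖ ≤ √‖A‖ * ‖x‖ := by
  refine le_sqrt_mul_of_sq_le (norm_nonneg x) ?_
  rw [← inner_self_eq_norm_sq (𝕜 := ℂ)]
  calc re ⟪A x, x⟫_ℂ ≤ ‖A x‖ * ‖x‖ := re_inner_le_norm _ _
    _ ≤ ‖A‖ * ‖x‖ * ‖x‖ := by gcongr; exact A.le_opNorm x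
    _ = ‖A‖ * ‖x‖ ^ 2 := by ring

/- A bounded operator need not be `‖·‖_A`-bounded; an `A`-selfadjoint one is, by the power trick
combined with the crude estimate `‖y‖_A ≤ √‖A‖ ‖y‖`. -/
lemma norm_lift_apply_le_of_isSymmetric {S : H →L[ℂ] H}
    (hS : (lift S : Module.End ℂ (WithA A)).IsSymmetric) (x : WithA A) :
    ‖lift S x‖ ≤ ‖S‖ * ‖x‖ := by
  refine hS.norm_apply_le_of_norm_pow_apply_le (C := √‖A‖ * ‖toA.symm x‖) (norm_nonneg S)
    fun n => ?_
  rw [lift_pow]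
  calc ‖(toA ((S ^ n) (toA.symm x)) : WithA A)‖ ≤ √‖A‖ * ‖(S ^ n) (toA.symm x)‖ := norm_toA_le _
    _ ≤ √‖A‖ * (‖S‖ ^ n * ‖toA.symm x‖) := by gcongr; exact S.norm_pow_apply_le n _
    _ = _ := by ring

lemma exists_norm_lift_apply_le {T T' : H →L[ℂ] H}
    (h : AreAdjoint (lift T : Module.End ℂ (WithA A)) (lift T')) :
    ∃ C, ∀ x : WithA A, ‖lift T x‖ ≤ C * ‖x‖ :=
  ⟨_, h.norm_apply_le (norm_lift_apply_le_of_isSymmetric (S := T' ∘L T) (h.symm.comp h))⟩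

lemma wA_eq_numRadius (T : H →L[ℂ] H) : wA A T = numRadius (lift T : Module.End ℂ (WithA A)) :=
  rfl

lemma norm_lift_apply_le_opNormA_of_mem {P : H →L[ℂ] H} {C : ℝ}
    (hC : ∀ x : WithA A, ‖lift P x‖ ≤ C * ‖x‖) {y : H} (hy : y ∈ closure (Set.range A)) :
    ‖lift P (toA y : WithA A)‖ ≤ opNormA A P * ‖(toA y : WithA A)‖ := by
  have hbdd : BddAbove {r | ∃ y ∈ closure (Set.range A), sNormA A y = 1 ∧ r = sNormA A (P y)} :=
    ⟨C, fun _ ⟨z, _, hz, hr⟩ => hr ▸ (hC (toA z)).trans_eq (by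
      rw [show ‖(toA z : WithA A)‖ = 1 from hz, mul_one])⟩
  rcases (norm_nonneg (toA y : WithA A)).eq_or_lt with h0 | hpos
  · simpa [← h0] using hC (toA y)
  set c : ℂ := ((‖(toA y : WithA A)‖⁻¹ : ℝ) : ℂ)
  have hc : ‖c‖ = ‖(toA y : WithA A)‖⁻¹ := by rw [Complex.norm_real, norm_inv, norm_norm]
  have hcy : sNormA A (c • y) = 1 := by
    change ‖(toA (c • y) : WithA A)‖ = 1
    rw [map_smul, norm_smul, hc, inv_mul_cancel₀ hpos.ne']
  have hmem : c • y ∈ closure (Set.range A) := by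
    rw [← ContinuousLinearMap.coe_coe, ← LinearMap.coe_range,
      ← Submodule.topologicalClosure_coe] at hy ⊢
    exact Submodule.smul_mem _ c hy
  have hle := le_csSup hbdd ⟨_, hmem, hcy, rfl⟩
  change ‖lift P (toA (c • y) : WithA A)‖ ≤ opNormA A P at hle
  rwa [map_smul, map_smul, norm_smul, hc, inv_mul_le_iff₀ hpos, mul_comm] at hle

lemma norm_toA_fst_sq_add_norm_toA_snd_sq {x : WithLp 2 (H × H)}
    (hx : sNormA (blk2 A 0 0 A) x = 1) :
    ‖(toA x.fst : WithA A)‖ ^ 2 + ‖(toA x.snd : WithA A)‖ ^ 2 = 1 := by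
  rw [← inner_self_eq_norm_sq (𝕜 := ℂ), ← inner_self_eq_norm_sq (𝕜 := ℂ), ← map_add]
  change (sInnerA A x.fst x.fst + sInnerA A x.snd x.snd).re = 1
  rwa [← sInnerA_blk2_diag, ← Real.sqrt_eq_one]

variable [CompleteSpace H]

lemma areAdjoint_lift {T T' : H →L[ℂ] H} (h : IsSharpA A T T') :
    AreAdjoint (lift T : Module.End ℂ (WithA A)) (lift T') := fun x y => by
  change ⟪A (T (toA.symm x)), toA.symm y⟫_ℂ = ⟪A (toA.symm x), T' (toA.symm y)⟫_ℂ
  rw [hA.out.inner_left_eq_inner_right, ← adjoint_inner_right, ← ContinuousLinearMap.comp_apply,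
    ← h.1, ContinuousLinearMap.comp_apply, hA.out.inner_left_eq_inner_right]

lemma norm_sub_toA_eq_zero (x : WithA A) :
    ∃ y ∈ closure (Set.range A), ‖x - toA y‖ = 0 := by
  set K := LinearMap.range (A : H →ₗ[ℂ] H)
  set n := Kᗮ.starProjection (toA.symm x)
  have hAn : A n = 0 := by
    have : n ∈ (adjoint A).ker := by
      rw [← ContinuousLinearMap.orthogonal_range]
      exact Kᗮ.starProjection_apply_mem _
    rwa [hA.out.isSelfAdjoint.adjoint_eq] at this
  refine ⟨toA.symm x - n, ?_, ?_⟩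
  · rw [← ContinuousLinearMap.coe_coe, ← LinearMap.coe_range, ← Submodule.topologicalClosure_coe,
      ← K.orthogonal_orthogonal_eq_closure]
    exact Kᗮ.sub_starProjection_mem_orthogonal _
  · change √(re ⟪A (toA.symm x - (toA.symm x - n)), toA.symm x - (toA.symm x - n)⟫_ℂ) = 0
    simp [hAn]

/- `opNormA` only tests vectors of `closure (range A)`; any `x` differs from such a vector by an
element of `(range A)ᗮ = ker A`, which is `‖·‖_A`-null. -/
lemma norm_lift_apply_le_opNormA {P : H →L[ℂ] H}
    (hP : ∃ C, ∀ x : WithA A, ‖lift P x‖ ≤ C * ‖x‖) (x : WithA A) :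
    ‖lift P x‖ ≤ opNormA A P * ‖x‖ := by
  obtain ⟨C, hC⟩ := hP
  obtain ⟨y, hy, hn⟩ := norm_sub_toA_eq_zero x
  have hPn : ‖lift P (x - toA y)‖ = 0 :=
    le_antisymm ((hC _).trans_eq (by rw [hn, mul_zero])) (norm_nonneg _)
  rw [← add_sub_cancel (toA y) x, map_add, norm_add_eq_left_of_norm_eq_zero hPn,
    norm_add_eq_left_of_norm_eq_zero hn]
  exact norm_lift_apply_le_opNormA_of_mem hC hy

end WithA

end SemiInnerProductOfPositive


open WithA in
theorem stmt12_general {H : Type*} [NormedAddCommGroup H] [InnerProductSpace ℂ H] [CompleteSpace H]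
    (A : H →L[ℂ] H) (hA : A.IsPositive)
    (T₁ T₂ T₁s T₂s : H →L[ℂ] H)
    (hT₁s : IsSharpA A T₁ T₁s) (hT₂s : IsSharpA A T₂ T₂s) :
    wA (blk2 A 0 0 A) (blk2 0 T₁ T₂ 0) ^ 4 ≤
      (1 / 16) * opNormA A (T₁s ∘L T₁ + T₂ ∘L T₂s) ^ 2 +
        (1 / 4) * wA A (T₂ ∘L T₁) ^ 2 +
        (1 / 8) * wA A ((T₁s ∘L T₁ + T₂ ∘L T₂s) ∘L (T₂ ∘L T₁) +
          (T₂ ∘L T₁) ∘L (T₁s ∘L T₁ + T₂ ∘L T₂s)) := by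
  have : Fact A.IsPositive := ⟨hA⟩
  set P := T₁s ∘L T₁ + T₂ ∘L T₂s
  set W := T₂ ∘L T₁
  have h₁ := areAdjoint_lift (A := A) hT₁s
  have h₂ := areAdjoint_lift (A := A) hT₂s
  have hP : AreAdjoint (lift (A := A) P) (lift P) := (h₁.symm.comp h₁).add (h₂.comp h₂.symm)
  have hW : AreAdjoint (lift (A := A) W) (lift (T₁s ∘L T₂s)) := h₂.comp h₁
  have hG : AreAdjoint (lift (A := A) (P ∘L W + W ∘L P))
      (lift ((T₁s ∘L T₂s) ∘L P + P ∘L (T₁s ∘L T₂s))) := (hP.comp hW).add (hW.comp hP)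
  have hp : 0 ≤ opNormA A P := opNormA_nonneg_s12 A P
  have hw : 0 ≤ wA A W := by rw [wA_eq_numRadius]; exact numRadius_nonneg _
  have hg : 0 ≤ wA A (P ∘L W + W ∘L P) := by rw [wA_eq_numRadius]; exact numRadius_nonneg _
  refine Real.sSup_pow_le four_ne_zero (by positivity) ?_
  rintro r ⟨x, hx, rfl⟩
  refine ⟨norm_nonneg _, ?_⟩
  have hPp := norm_lift_apply_le_opNormA (exists_norm_lift_apply_le hP)
  have hWw := norm_inner_apply_self_le_numRadius (exists_norm_lift_apply_le hW)
  have hGg := norm_inner_apply_self_le_numRadius (exists_norm_lift_apply_le hG)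
  rw [sInnerA_blk2_diag_offDiag]
  exact h₁.norm_inner_add_inner_pow_four_le h₂ hp hw hg hPp hWw hGg
    (norm_toA_fst_sq_add_norm_toA_snd_sq hx)

theorem stmt12 {H : Type*} [NormedAddCommGroup H] [InnerProductSpace ℂ H] [CompleteSpace H]
    (A : H →L[ℂ] H) (hA : A.IsPositive)
    (T₁ T₂ T₁s T₂s : H →L[ℂ] H) (hT₁ : memBA A T₁) (hT₂ : memBA A T₂)
    (hT₁s : IsSharpA A T₁ T₁s) (hT₂s : IsSharpA A T₂ T₂s) :
    wA (blk2 A 0 0 A) (blk2 0 T₁ T₂ 0) ^ 4 ≤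
      (1 / 16) * opNormA A (T₁s ∘L T₁ + T₂ ∘L T₂s) ^ 2 +
        (1 / 4) * wA A (T₂ ∘L T₁) ^ 2 +
        (1 / 8) * wA A ((T₁s ∘L T₁ + T₂ ∘L T₂s) ∘L (T₂ ∘L T₁) +
          (T₂ ∘L T₁) ∘L (T₁s ∘L T₁ + T₂ ∘L T₂s)) :=
  stmt12_general A hA T₁ T₂ T₁s T₂s hT₁s hT₂s
end
end
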